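/- arXiv:2108.07677 — 4 statements merged into one kernel-verified Lean document; each statement's English description precedes it below -/
import Mathlib

section
/- The derivative of the Riemann zeta function at s = 0 equals -(1/2)·log(2π); equivalently, exp(-ζ'(0)) = √(2π), which expresses the zeta-regularized product ∏_{n=1}^∞ n = √(2π). -/
open Complex Real

namespace Paper

/-- The derivative of the Riemann zeta function at `s = 0` equals `-(1/2) · log (2π)`;
equivalently `exp (-ζ'(0)) = √(2π)`, expressing the zeta-regularized product
`∏_{n=1}^∞ n = √(2π)`. -/
theorem deriv_riemannZeta_zero :
    deriv riemannZeta 0 = -(1 / 2 : ℂ) * Real.log (2 * Real.pi) ∧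
    Complex.exp (-(deriv riemannZeta 0)) = (Real.sqrt (2 * Real.pi) : ℂ) := by
  have hderiv : deriv riemannZeta 0 = -(1 / 2 : ℂ) * Real.log (2 * Real.pi) := by
    rw [_root_.deriv_riemannZeta_zero, ofReal_log (by positivity)]
    push_cast
    ring
  refine ⟨hderiv, ?_⟩
  have hexponent :
      -(-(1 / 2 : ℂ) * Real.log (2 * Real.pi)) = (Real.log (2 * Real.pi) / 2 : ℝ) := by
    push_cast
    ring
  rw [hderiv, hexponent, ← ofReal_exp, Real.exp_half, Real.exp_log (by positivity)]

end Paper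
end

section
/- Let N be a positive natural number, let x be a complex number with Re(x) > 0, and let s be a complex number with Re(s) > N. Then the family (m₁,…,m_N) ↦ (x + m₁ + ⋯ + m_N)^{-s}, indexed by N-tuples of natural numbers (i.e. by functions Fin N → ℕ), is absolutely summable. -/
open Complex

/-! For `Re z ≥ 0` we have `|arg z| ≤ π/2`, so `‖z^{-s}‖ ≤ e^{π |Im s| / 2} ‖z‖^{-Re s}`, and
`‖x + ∑ mⱼ‖ ≥ c (1 + ∑ mⱼ)` with `c = min (Re x) 1`. Since every factor `1 + mᵢ` is at most
`1 + ∑ mⱼ`, we get `(1 + ∑ mⱼ)^{-Re s} ≤ ∏ⱼ (1 + mⱼ)^{-t}` with `t = Re s / N > 1`, and the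
right-hand side is summable over `m` as a product of `N` copies of the series `∑ₙ (1 + n)^{-t}`. -/

open scoped Real

lemma summable_fin_pi_prod {β : Type*} {f : β → ℝ} (hf : Summable f) (hf0 : 0 ≤ f) :
    ∀ n : ℕ, Summable fun m : Fin n → β => ∏ j, f (m j)
  | 0 => Summable.of_finite
  | n + 1 => by
    rw [← (Fin.consEquiv fun _ : Fin (n + 1) => β).summable_iff]
    refine (hf.mul_of_nonneg (summable_fin_pi_prod hf hf0 n) hf0
      fun m => Finset.prod_nonneg fun j _ => hf0 _).congr fun p => ?_
    simp [Fin.consEquiv, Fin.prod_univ_succ]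

lemma norm_cpow_le_exp_mul_rpow_of_re_nonneg {z : ℂ} (hz : 0 ≤ z.re) (w : ℂ) :
    ‖z ^ w‖ ≤ Real.exp (π / 2 * |w.im|) * ‖z‖ ^ w.re := by
  have harg : -(z.arg * w.im) ≤ π / 2 * |w.im| := by
    calc -(z.arg * w.im) ≤ |z.arg| * |w.im| := by rw [← abs_mul]; exact neg_le_abs _
      _ ≤ π / 2 * |w.im| := by gcongr; exact abs_arg_le_pi_div_two_iff.mpr hz
  calc ‖z ^ w‖ ≤ ‖z‖ ^ w.re / Real.exp (z.arg * w.im) := norm_cpow_le z w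
    _ = Real.exp (-(z.arg * w.im)) * ‖z‖ ^ w.re := by rw [Real.exp_neg]; ring
    _ ≤ Real.exp (π / 2 * |w.im|) * ‖z‖ ^ w.re := by gcongr

lemma min_re_one_mul_le_norm_add_ofReal (x : ℂ) {a : ℝ} (ha : 0 ≤ a) :
    min x.re 1 * (1 + a) ≤ ‖x + a‖ := by
  calc min x.re 1 * (1 + a) = min x.re 1 + min x.re 1 * a := by ring
    _ ≤ x.re + a := add_le_add (min_le_left _ _) (mul_le_of_le_one_left ha (min_le_right _ _))
    _ = (x + a).re := by simp
    _ ≤ ‖x + a‖ := re_le_norm _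

lemma one_add_sum_rpow_neg_le_prod {ι : Type*} [Fintype ι] {a : ι → ℝ} (ha : ∀ i, 0 ≤ a i)
    {t : ℝ} (ht : 0 ≤ t) :
    (1 + ∑ i, a i) ^ (-(Fintype.card ι * t)) ≤ ∏ i, (1 + a i) ^ (-t) := by
  have h1 : ∀ i, 0 < 1 + a i := fun i => by linarith [ha i]
  have hprod : ∏ i, (1 + a i) ≤ (1 + ∑ i, a i) ^ Fintype.card ι := by
    calc ∏ i, (1 + a i) ≤ ∏ _i : ι, (1 + ∑ i, a i) :=
          Finset.prod_le_prod (fun i _ => (h1 i).le) fun i _ => by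
            gcongr; exact Finset.single_le_sum (fun j _ => ha j) (Finset.mem_univ i)
      _ = (1 + ∑ i, a i) ^ Fintype.card ι := by simp
  rw [Real.finsetProd_rpow _ _ fun i _ => (h1 i).le, neg_mul_eq_mul_neg,
    Real.rpow_natCast_mul (by linarith [Finset.sum_nonneg fun i (_ : i ∈ Finset.univ) => ha i])]
  exact Real.rpow_le_rpow_of_nonpos (Finset.prod_pos fun i _ => h1 i) hprod (by linarith)

lemma norm_cpow_neg_add_sum_le_prod {ι : Type*} [Fintype ι] {x : ℂ} (hx : 0 < x.re) {s : ℂ}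
    {t : ℝ} (ht : 0 ≤ t) (hst : Fintype.card ι * t = s.re) {a : ι → ℝ} (ha : ∀ i, 0 ≤ a i) :
    ‖(x + ∑ i, (a i : ℂ)) ^ (-s)‖ ≤
      Real.exp (π / 2 * |s.im|) * min x.re 1 ^ (-s.re) * ∏ i, (1 + a i) ^ (-t) := by
  have hsum : 0 ≤ ∑ i, a i := Finset.sum_nonneg fun i _ => ha i
  have hs : 0 ≤ s.re := hst ▸ by positivity
  have hre : 0 ≤ (x + ↑(∑ i, a i)).re := by rw [add_re, ofReal_re]; positivity
  rw [← ofReal_sum]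
  calc ‖(x + ↑(∑ i, a i)) ^ (-s)‖
        ≤ Real.exp (π / 2 * |s.im|) * ‖x + ↑(∑ i, a i)‖ ^ (-s.re) := by
          simpa using norm_cpow_le_exp_mul_rpow_of_re_nonneg hre (-s)
    _ ≤ Real.exp (π / 2 * |s.im|) * (min x.re 1 * (1 + ∑ i, a i)) ^ (-s.re) :=
          mul_le_mul_of_nonneg_left (Real.rpow_le_rpow_of_nonpos (by positivity)
            (min_re_one_mul_le_norm_add_ofReal x hsum) (by linarith)) (Real.exp_pos _).le
    _ = Real.exp (π / 2 * |s.im|) * min x.re 1 ^ (-s.re) *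
          (1 + ∑ i, a i) ^ (-(Fintype.card ι * t)) := by
          rw [Real.mul_rpow (lt_min hx one_pos).le (by positivity), hst, mul_assoc]
    _ ≤ _ := by gcongr; exact one_add_sum_rpow_neg_le_prod ha ht

/-- For `N ≥ 1`, `Re(x) > 0` and `Re(s) > N`, the family
`(m₁,…,m_N) ↦ (x + m₁ + ⋯ + m_N)^{-s}` indexed by `m : Fin N → ℕ` is absolutely
summable. -/
theorem barnes_summable (N : ℕ) (hN : 0 < N) (x s : ℂ) (hx : 0 < x.re)
    (hs : (N : ℝ) < s.re) :
    Summable fun m : Fin N → ℕ => ‖(x + ∑ j, (m j : ℂ)) ^ (-s)‖ := by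
  set t := s.re / N
  have hNt : N * t = s.re := mul_div_cancel₀ _ (by positivity)
  have ht : 1 < t := (one_lt_div (by positivity)).mpr hs
  have hf : Summable fun n : ℕ => (1 + n : ℝ) ^ (-t) := by
    simpa [add_comm] using
      (summable_nat_add_iff 1).mpr (Real.summable_nat_rpow.mpr (neg_lt_neg ht))
  refine Summable.of_nonneg_of_le (fun _ => norm_nonneg _) (fun m => ?_)
    ((summable_fin_pi_prod hf (fun n => by positivity) N).mul_left
      (Real.exp (π / 2 * |s.im|) * min x.re 1 ^ (-s.re)))
  simpa using norm_cpow_neg_add_sum_le_prod hx (by positivity) (by simpa using hNt)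
    (a := fun j => (m j : ℝ)) fun j => (m j).cast_nonneg
end

section
/- (Mellin representation of the Barnes multiple zeta function.) Let N be a positive natural number, x a complex number with Re(x) > 0, and s a complex number with Re(s) > N. Then Σ over all N-tuples (m₁,…,m_N) of natural numbers of (x + m₁ + ⋯ + m_N)^{-s} equals (1/Γ(s)) · ∫_0^∞ t^{s-1} e^{-xt} (1 - e^{-t})^{-N} dt. -/
open Complex MeasureTheory

open Set Filter Topology

/-!
Expanding `(1 - e^{-t})^{-N}` as an `N`-fold geometric series turns the integrand into
`∑_m t^{s-1} e^{-(x + m₁ + ⋯ + m_N) t}`, and each term integrates to `Γ(s) (x + m₁ + ⋯ + m_N)^{-s}`: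
for real `x` this is the Gamma integral, and both sides are holomorphic in `x` on `Re x > 0`.
Integrating termwise is legitimate because the integrals of the absolute values,
`Γ(Re s) (Re x + m₁ + ⋯ + m_N)^{-Re s}`, are summable when `Re s > N`: since
`(1 + m₁ + ⋯ + m_N)^N ≥ ∏ (1 + m_j)`, they are dominated by a product of `N` copies of the
`p`-series with `p = Re s / N > 1`.
-/

section PiProducts

variable {ι : Type*}

lemma summable_prod_pi_of_nonneg {f : ι → ℝ} (hf₀ : ∀ i, 0 ≤ f i) (hf : Summable f) (n : ℕ) :
    Summable fun m : Fin n → ι ↦ ∏ j, f (m j) := by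
  induction n with
  | zero => exact Summable.of_finite
  | succ n ih =>
    refine (Fin.consEquiv fun _ ↦ ι).summable_iff.mp ?_
    simpa [Function.comp_def, Fin.prod_univ_succ] using
      hf.mul_of_nonneg ih hf₀ fun m ↦ Finset.prod_nonneg fun j _ ↦ hf₀ _

lemma hasSum_prod_pi {R : Type*} [NormedCommRing R] [NormOneClass R] [CompleteSpace R]
    {f : ι → R} (hf : Summable (‖f ·‖)) (n : ℕ) :
    HasSum (fun m : Fin n → ι ↦ ∏ j, f (m j)) ((∑' i, f i) ^ n) := by
  induction n with
  | zero => simp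
  | succ n ih =>
    have hnorm : Summable fun m : Fin n → ι ↦ ‖∏ j, f (m j)‖ := by
      have := summable_prod_pi_of_nonneg (f := fun i ↦ ‖f i‖) (fun i ↦ norm_nonneg (f i)) hf n
      refine Summable.of_nonneg_of_le (fun m ↦ norm_nonneg _) (fun m ↦ ?_) this
      exact Finset.norm_prod_le Finset.univ fun j ↦ f (m j)
    rw [← (Fin.consEquiv fun _ ↦ ι).hasSum_iff, pow_succ']
    have hmul := summable_mul_of_summable_norm (f := f) hf hnorm
    exact (hf.of_norm.hasSum.mul ih hmul).congr_fun fun p ↦ by simp [Fin.prod_univ_succ]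

lemma hasSum_pow_sum_of_norm_lt_one {K : Type*} [NormedField K] [CompleteSpace K] {w : K}
    (hw : ‖w‖ < 1) (n : ℕ) :
    HasSum (fun m : Fin n → ℕ ↦ w ^ ∑ j, m j) ((1 - w)⁻¹ ^ n) := by
  have hgeom : Summable fun k : ℕ ↦ ‖w ^ k‖ := by
    simpa [norm_pow] using summable_geometric_of_lt_one (norm_nonneg w) hw
  simpa [Finset.prod_pow_eq_pow_sum, tsum_geometric_of_norm_lt_one hw] using
    hasSum_prod_pi hgeom n

end PiProducts

lemma norm_ofReal_cpow_mul_cexp_mul {t : ℝ} (ht : 0 < t) (a w : ℂ) :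
    ‖(t : ℂ) ^ a * cexp (w * t)‖ = t ^ a.re * Real.exp (w.re * t) := by
  simp [norm_cpow_eq_rpow_re_of_pos ht, Complex.norm_exp]

lemma integrableOn_cpow_mul_cexp_neg_mul_Ioi {a z : ℂ} (ha : -1 < a.re) (hz : 0 < z.re) :
    IntegrableOn (fun t : ℝ ↦ (t : ℂ) ^ a * cexp (-z * t)) (Ioi 0) := by
  have hmeas : AEStronglyMeasurable (fun t : ℝ ↦ (t : ℂ) ^ a * cexp (-z * t))
      (volume.restrict (Ioi 0)) := by
    refine ContinuousOn.aestronglyMeasurable (fun t ht ↦ ?_) measurableSet_Ioi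
    exact ((continuousAt_ofReal_cpow_const t a (Or.inr (ne_of_gt ht))).mul
      (by fun_prop)).continuousWithinAt
  refine (integrable_norm_iff hmeas).mp ?_
  refine (integrableOn_rpow_mul_exp_neg_mul_rpow (p := 1) ha one_pos hz).congr_fun
    (fun t ht ↦ ?_) measurableSet_Ioi
  show _ = ‖(t : ℂ) ^ a * cexp (-z * t)‖
  rw [norm_ofReal_cpow_mul_cexp_mul ht]
  simp

lemma differentiableOn_integral_cpow_mul_cexp_neg_mul {a : ℂ} (ha : -1 < a.re) :
    DifferentiableOn ℂ (fun z : ℂ ↦ ∫ t in Ioi (0 : ℝ), (t : ℂ) ^ a * cexp (-z * t))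
      {z | 0 < z.re} := by
  intro z₀ (hz₀ : 0 < z₀.re)
  obtain ⟨ε, hε, hz₀ε⟩ : ∃ ε : ℝ, 0 < ε ∧ z₀.re = 2 * ε := ⟨z₀.re / 2, by positivity, by ring⟩
  have hre {z : ℂ} (hz : z ∈ Metric.ball z₀ ε) : ε ≤ z.re := by
    have := (abs_re_le_norm (z - z₀)).trans_lt (mem_ball_iff_norm.mp hz)
    rw [sub_re, abs_lt] at this
    linarith
  have hderiv : ∀ t : ℝ, 0 < t → ∀ z ∈ Metric.ball z₀ ε,
      HasDerivAt (fun z : ℂ ↦ (t : ℂ) ^ a * cexp (-z * t))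
        (-((t : ℂ) ^ (a + 1) * cexp (-z * t))) z := by
    intro t ht z _
    have h := (((hasDerivAt_id z).neg.mul_const (t : ℂ)).cexp).const_mul ((t : ℂ) ^ a)
    refine h.congr_deriv ?_
    rw [cpow_add _ _ (ofReal_ne_zero.mpr ht.ne'), cpow_one]
    simp only [Pi.neg_apply, id]
    ring
  have hbound : ∀ t : ℝ, 0 < t → ∀ z ∈ Metric.ball z₀ ε,
      ‖-((t : ℂ) ^ (a + 1) * cexp (-z * t))‖ ≤ ‖(t : ℂ) ^ (a + 1) * cexp (-(ε : ℂ) * t)‖ := by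
    intro t ht z hz
    rw [norm_neg, norm_ofReal_cpow_mul_cexp_mul ht, norm_ofReal_cpow_mul_cexp_mul ht]
    refine mul_le_mul_of_nonneg_left (Real.exp_le_exp.mpr ?_) (by positivity)
    simp only [neg_re, ofReal_re]
    nlinarith [hre hz]
  have hF (z : ℂ) (hz : 0 < z.re) := integrableOn_cpow_mul_cexp_neg_mul_Ioi ha hz
  have hF' (z : ℂ) (hz : 0 < z.re) := integrableOn_cpow_mul_cexp_neg_mul_Ioi
    (a := a + 1) (by simp only [add_re, one_re]; linarith) hz
  have hdiff := hasDerivAt_integral_of_dominated_loc_of_deriv_le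
    (F := fun z (t : ℝ) ↦ (t : ℂ) ^ a * cexp (-z * t))
    (F' := fun z (t : ℝ) ↦ -((t : ℂ) ^ (a + 1) * cexp (-z * t))) (Metric.ball_mem_nhds z₀ hε)
    (eventually_of_mem (Metric.ball_mem_nhds z₀ hε) fun z hz ↦
      (hF z (hε.trans_le (hre hz))).aestronglyMeasurable) (hF z₀ hz₀)
    (hF' z₀ hz₀).aestronglyMeasurable.neg ((ae_restrict_mem measurableSet_Ioi).mono hbound)
    (hF' ε (by simpa using hε)).norm ((ae_restrict_mem measurableSet_Ioi).mono hderiv)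
  exact hdiff.2.differentiableAt.differentiableWithinAt

lemma integral_cpow_mul_cexp_neg_mul_Ioi {s z : ℂ} (hs : 0 < s.re) (hz : 0 < z.re) :
    ∫ t in Ioi (0 : ℝ), (t : ℂ) ^ (s - 1) * cexp (-z * t) = Gamma s * z ^ (-s) := by
  have hU : IsOpen {z : ℂ | 0 < z.re} := isOpen_lt continuous_const continuous_re
  have hs' : -1 < (s - 1).re := by simp [hs]
  have hlhs := (differentiableOn_integral_cpow_mul_cexp_neg_mul hs').analyticOnNhd hU
  have hrhs : AnalyticOnNhd ℂ (fun z : ℂ ↦ Gamma s * z ^ (-s)) {z | 0 < z.re} :=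
    DifferentiableOn.analyticOnNhd (fun z hz ↦ ((differentiableAt_id.cpow
      (differentiableAt_const _) (Or.inl hz)).const_mul _).differentiableWithinAt) hU
  have hreal : ∀ r : ℝ, 0 < r →
      ∫ t in Ioi (0 : ℝ), (t : ℂ) ^ (s - 1) * cexp (-r * t) = Gamma s * (r : ℂ) ^ (-s) := by
    intro r hr
    simp_rw [neg_mul, integral_cpow_mul_exp_neg_mul_Ioi hs hr, one_div,
      inv_cpow (r : ℂ) s (by simpa [arg_ofReal_of_nonneg hr.le] using Real.pi_ne_zero.symm),
      ← cpow_neg, mul_comm]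
  -- The two sides agree on the positive reals, which accumulate at `1`.
  have hfreq : ∃ᶠ w in 𝓝[≠] (1 : ℂ), ∫ t in Ioi (0 : ℝ), (t : ℂ) ^ (s - 1) * cexp (-w * t)
      = Gamma s * w ^ (-s) := by
    have hmap : Tendsto ((↑) : ℝ → ℂ) (𝓝[≠] 1) (𝓝[≠] 1) :=
      tendsto_nhdsWithin_iff.mpr ⟨(continuous_ofReal.tendsto' 1 1 ofReal_one).mono_left
        nhdsWithin_le_nhds, eventually_nhdsWithin_of_forall fun r hr ↦ by simpa using hr⟩
    refine hmap.frequently (Eventually.frequently ?_)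
    filter_upwards [eventually_nhdsWithin_of_eventually_nhds (lt_mem_nhds one_pos)] with r hr
    exact hreal r hr
  exact hlhs.eqOn_of_preconnected_of_frequently_eq hrhs
    (convex_halfSpace_re_gt 0).isPreconnected (by simp) hfreq hz

lemma hasSum_Gamma_mul_cpow_neg {ι : Type*} [Countable ι] {s : ℂ} (hs : 0 < s.re) {z : ι → ℂ}
    (hz : ∀ i, 0 < (z i).re) (hsum : Summable fun i ↦ (z i).re ^ (-s.re)) :
    HasSum (fun i ↦ Gamma s * z i ^ (-s))
      (∫ t in Ioi (0 : ℝ), ∑' i, (t : ℂ) ^ (s - 1) * cexp (-z i * t)) := by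
  have hs' : -1 < (s - 1).re := by simp [hs]
  have hnorm (i : ι) : ∫ t in Ioi (0 : ℝ), ‖(t : ℂ) ^ (s - 1) * cexp (-z i * t)‖
      = (z i).re ^ (-s.re) * Real.Gamma s.re := by
    rw [setIntegral_congr_fun measurableSet_Ioi fun t ht ↦ norm_ofReal_cpow_mul_cexp_mul ht _ _]
    simp only [sub_re, one_re, neg_re, neg_mul]
    rw [Real.integral_rpow_mul_exp_neg_mul_Ioi hs (hz i), one_div,
      Real.inv_rpow (hz i).le, Real.rpow_neg (hz i).le]
  refine (hasSum_integral_of_summable_integral_norm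
      (fun i ↦ integrableOn_cpow_mul_cexp_neg_mul_Ioi hs' (hz i))
      (by simpa only [hnorm] using hsum.mul_right (Real.Gamma s.re))).congr_fun fun i ↦ ?_
  exact (integral_cpow_mul_cexp_neg_mul_Ioi hs (hz i)).symm

lemma summable_rpow_neg_add_sum {N : ℕ} {c σ : ℝ} (hc : 0 < c) (hσ : N < σ) :
    Summable fun m : Fin N → ℕ ↦ (c + ∑ j, (m j : ℝ)) ^ (-σ) := by
  rcases N.eq_zero_or_pos with rfl | hN
  · exact Summable.of_finite
  set p := σ / N
  have hp : 1 < p := (one_lt_div (by positivity)).mpr hσ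
  have hσp : σ = N * p := by
    simp only [p]
    field_simp
  have hgeom : Summable fun k : ℕ ↦ ((k : ℝ) + 1) ^ (-p) := by
    simpa using (summable_nat_add_iff 1).mpr (Real.summable_nat_rpow.mpr (by linarith))
  refine Summable.of_nonneg_of_le (fun m ↦ by positivity) (fun m ↦ ?_)
    ((summable_prod_pi_of_nonneg (fun k ↦ by positivity) hgeom N).mul_left (min c 1 ^ (-σ)))
  set S := ∑ j, (m j : ℝ)
  have hS : 0 ≤ S := by positivity
  have hprod : ∏ j, ((m j : ℝ) + 1) ≤ (1 + S) ^ N := by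
    simpa using Finset.prod_le_prod (s := Finset.univ) (fun j _ ↦ by positivity)
      fun j _ ↦ (show (m j : ℝ) + 1 ≤ 1 + S by
        linarith [Finset.single_le_sum (fun i _ ↦ (m i).cast_nonneg (α := ℝ))
          (Finset.mem_univ j)])
  calc (c + S) ^ (-σ) ≤ (min c 1 * (1 + S)) ^ (-σ) := by
        refine Real.rpow_le_rpow_of_nonpos (by positivity) ?_ (by linarith)
        nlinarith [min_le_left c 1, min_le_right c 1]
    _ = min c 1 ^ (-σ) * ((1 + S) ^ N) ^ (-p) := by
        rw [Real.mul_rpow (by positivity) (by positivity), ← Real.rpow_natCast,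
          ← Real.rpow_mul (by positivity), hσp]
        ring_nf
    _ ≤ min c 1 ^ (-σ) * ∏ j, ((m j : ℝ) + 1) ^ (-p) := by
        rw [Real.finsetProd_rpow _ _ fun j _ ↦ by positivity]
        exact mul_le_mul_of_nonneg_left
          (Real.rpow_le_rpow_of_nonpos (by positivity) hprod (by linarith)) (by positivity)

lemma hasSum_cexp_neg_add_sum_mul (x : ℂ) {t : ℝ} (ht : 0 < t) (N : ℕ) :
    HasSum (fun m : Fin N → ℕ ↦ cexp (-(x + ∑ j, (m j : ℂ)) * t))
      (cexp (-x * t) * (1 - cexp (-(t : ℂ))) ^ (-(N : ℤ))) := by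
  have hw : ‖cexp (-(t : ℂ))‖ < 1 := by simpa [Complex.norm_exp] using ht
  rw [zpow_neg, zpow_natCast, ← inv_pow]
  refine ((hasSum_pow_sum_of_norm_lt_one hw N).mul_left (cexp (-x * t))).congr_fun fun m ↦ ?_
  rw [← Complex.exp_nat_mul, ← Complex.exp_add]
  push_cast
  ring_nf

theorem barnes_mellin_general (N : ℕ) (x s : ℂ) (hx : 0 < x.re)
    (hs : (N : ℝ) < s.re) :
    ∑' m : Fin N → ℕ, (x + ∑ j, (m j : ℂ)) ^ (-s) =
      (1 / Complex.Gamma s) *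
        ∫ t in Set.Ioi (0 : ℝ),
          (t : ℂ) ^ (s - 1) * Complex.exp (-x * t) *
            (1 - Complex.exp (-(t : ℂ))) ^ (-(N : ℤ)) := by
  have hs₀ : 0 < s.re := N.cast_nonneg.trans_lt hs
  have hz_re (m : Fin N → ℕ) : (x + ∑ j, (m j : ℂ)).re = x.re + ∑ j, (m j : ℝ) := by simp
  have hz (m : Fin N → ℕ) : 0 < (x + ∑ j, (m j : ℂ)).re := by rw [hz_re]; positivity
  have hmellin := hasSum_Gamma_mul_cpow_neg hs₀ hz
    (by simpa only [hz_re] using summable_rpow_neg_add_sum hx hs)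
  have hpoint : ∀ t ∈ Ioi (0 : ℝ),
      ∑' m : Fin N → ℕ, (t : ℂ) ^ (s - 1) * cexp (-(x + ∑ j, (m j : ℂ)) * t) =
        (t : ℂ) ^ (s - 1) * cexp (-x * t) * (1 - cexp (-(t : ℂ))) ^ (-(N : ℤ)) := fun t ht ↦ by
    rw [mul_assoc]
    exact ((hasSum_cexp_neg_add_sum_mul x ht N).mul_left ((t : ℂ) ^ (s - 1))).tsum_eq
  rw [setIntegral_congr_fun measurableSet_Ioi hpoint] at hmellin
  rw [← hmellin.tsum_eq, tsum_mul_left, one_div,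
    inv_mul_cancel_left₀ (Gamma_ne_zero_of_re_pos hs₀)]

/-- **Mellin representation of the Barnes multiple zeta function.** For `N ≥ 1`,
`Re(x) > 0` and `Re(s) > N`,
`Σ_{m : Fin N → ℕ} (x + m₁ + ⋯ + m_N)^{-s}
  = (1/Γ(s)) ∫_0^∞ t^{s-1} e^{-xt} (1 - e^{-t})^{-N} dt`. -/
theorem barnes_mellin (N : ℕ) (hN : 0 < N) (x s : ℂ) (hx : 0 < x.re)
    (hs : (N : ℝ) < s.re) :
    ∑' m : Fin N → ℕ, (x + ∑ j, (m j : ℂ)) ^ (-s) =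
      (1 / Complex.Gamma s) *
        ∫ t in Set.Ioi (0 : ℝ),
          (t : ℂ) ^ (s - 1) * Complex.exp (-x * t) *
            (1 - Complex.exp (-(t : ℂ))) ^ (-(N : ℤ)) :=
  barnes_mellin_general N x s hx hs
end

section
/- (Mellin representation of the multiple Barnes–Euler zeta function.) Let N be a positive natural number, x a complex number with Re(x) > 0, and s a complex number with Re(s) > N. Then Σ over all N-tuples (m₁,…,m_N) of natural numbers of (-1)^{m₁+⋯+m_N} (x + m₁ + ⋯ + m_N)^{-s} equals (1/Γ(s)) · ∫_0^∞ t^{s-1} e^{-xt} (1 + e^{-t})^{-N} dt. -/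
/-!
Expanding `(1 + e^{-t})^{-N} = Σ_m (-e^{-t})^{m₁+⋯+m_N}` turns the integrand into a series
whose `m`-th term integrates, by the Gamma integral `∫ t^{s-1} e^{-a t} dt = a^{-s} Γ(s)` at
`a = x + m₁ + ⋯ + m_N`, to `Γ(s)` times the `m`-th term of the Barnes–Euler sum. Dominated
convergence justifies the interchange: the series of absolute values sums to
`t^{Re s - 1} e^{-t Re x} (1 - e^{-t})^{-N}`, integrable at `0` because `Re s > N`. The Gamma
integral for complex `a` follows from the case `a > 0` by the identity theorem.
-/

open Complex MeasureTheory Set Filter Topology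

theorem pow_sum_comp_consEquiv {M : Type*} [Monoid M] (z : M) (k : ℕ) :
    (fun m : Fin (k + 1) → ℕ => z ^ ∑ j, m j) ∘ Fin.consEquiv (fun _ => ℕ) =
      fun p => z ^ p.1 * z ^ ∑ j, p.2 j := by
  ext p
  simp [Fin.consEquiv, Fin.sum_cons, pow_add]

theorem summable_pow_sum_fin {r : ℝ} (hr₀ : 0 ≤ r) (hr : r < 1) (N : ℕ) :
    Summable (fun m : Fin N → ℕ => r ^ ∑ j, m j) := by
  induction N with
  | zero => exact Summable.of_finite
  | succ k ih =>
    rw [← (Fin.consEquiv fun _ => ℕ).summable_iff, pow_sum_comp_consEquiv]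
    exact Summable.mul_of_nonneg (f := fun n : ℕ => r ^ n)
      (g := fun m : Fin k → ℕ => r ^ ∑ j, m j) (summable_geometric_of_lt_one hr₀ hr) ih
      (fun _ => by positivity) (fun _ => by positivity)

theorem hasSum_pow_sum_fin {𝕜 : Type*} [NormedField 𝕜] [CompleteSpace 𝕜] {z : 𝕜}
    (hz : ‖z‖ < 1) (N : ℕ) :
    HasSum (fun m : Fin N → ℕ => z ^ ∑ j, m j) ((1 - z)⁻¹ ^ N) := by
  induction N with
  | zero => simp
  | succ k ih =>
    have hnorm₁ : Summable fun n : ℕ => ‖z ^ n‖ := by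
      simpa only [norm_pow] using summable_geometric_of_lt_one (norm_nonneg z) hz
    have hnorm₂ : Summable fun m : Fin k → ℕ => ‖z ^ ∑ j, m j‖ := by
      simpa only [norm_pow] using summable_pow_sum_fin (norm_nonneg z) hz k
    rw [← (Fin.consEquiv fun _ => ℕ).hasSum_iff, pow_sum_comp_consEquiv, pow_succ']
    have hprod := summable_mul_of_summable_norm (f := fun n : ℕ => z ^ n)
      (g := fun m : Fin k → ℕ => z ^ ∑ j, m j) hnorm₁ hnorm₂
    exact HasSum.mul (f := fun n : ℕ => z ^ n) (g := fun m : Fin k → ℕ => z ^ ∑ j, m j)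
      (hasSum_geometric_of_norm_lt_one hz) ih hprod

theorem norm_cpow_mul_exp_neg_mul {t : ℝ} (ht : 0 < t) (s a : ℂ) :
    ‖(t : ℂ) ^ (s - 1) * exp (-(a * t))‖ = t ^ (s.re - 1) * Real.exp (-(a.re * t)) := by
  simp [norm_cpow_eq_rpow_re_of_pos ht, Complex.norm_exp]

theorem integrableOn_cpow_mul_exp_neg_mul {s a : ℂ} (hs : 0 < s.re) (ha : 0 < a.re) :
    IntegrableOn (fun t : ℝ => (t : ℂ) ^ (s - 1) * exp (-(a * t))) (Ioi 0) := by
  have hdom : IntegrableOn (fun t : ℝ => t ^ (s.re - 1) * Real.exp (-(a.re * t))) (Ioi 0) := by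
    simpa using integrableOn_rpow_mul_exp_neg_mul_rpow (by linarith) zero_lt_one ha
  refine hdom.mono' (by fun_prop) ((ae_restrict_iff' measurableSet_Ioi).mpr ?_)
  exact .of_forall fun t ht => (norm_cpow_mul_exp_neg_mul ht s a).le

theorem differentiableOn_integral_cpow_mul_exp_neg_mul {s : ℂ} (hs : 0 < s.re) :
    DifferentiableOn ℂ (fun a : ℂ => ∫ t in Ioi (0 : ℝ), (t : ℂ) ^ (s - 1) * exp (-(a * t)))
      {a | 0 < a.re} := by
  intro a₀ (ha₀ : 0 < a₀.re)
  set ε := a₀.re / 2 with hε_def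
  have hε : 0 < ε := by positivity
  have hderiv : ∀ (t : ℝ) (a : ℂ),
      HasDerivAt (fun a : ℂ => (t : ℂ) ^ (s - 1) * exp (-(a * t)))
        ((t : ℂ) ^ (s - 1) * exp (-(a * t)) * -t) a := fun t a => by
    simpa [mul_assoc] using
      (((hasDerivAt_id a).mul_const (t : ℂ)).neg.cexp).const_mul ((t : ℂ) ^ (s - 1))
  have hbound : ∀ t ∈ Ioi (0 : ℝ), ∀ a ∈ Metric.ball a₀ ε,
      ‖(t : ℂ) ^ (s - 1) * exp (-(a * t)) * -t‖ ≤
        ‖(t : ℂ) ^ (s + 1 - 1) * exp (-((ε : ℂ) * t))‖ := by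
    intro t (ht : 0 < t) a ha
    have hεa : ε ≤ a.re := by
      have := (abs_re_le_norm (a - a₀)).trans (mem_ball_iff_norm.mp ha).le
      rw [sub_re, abs_le] at this
      linarith
    rw [norm_mul, norm_cpow_mul_exp_neg_mul ht, norm_cpow_mul_exp_neg_mul ht, norm_neg,
      norm_real, Real.norm_of_nonneg ht.le, ofReal_re, add_re, one_re, add_sub_cancel_right,
      mul_right_comm, ← Real.rpow_add_one ht.ne', sub_add_cancel]
    gcongr
  exact (hasDerivAt_integral_of_dominated_loc_of_deriv_le (μ := volume.restrict (Ioi 0))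
    (F := fun (a : ℂ) (t : ℝ) => (t : ℂ) ^ (s - 1) * exp (-(a * t)))
    (F' := fun (a : ℂ) (t : ℝ) => (t : ℂ) ^ (s - 1) * exp (-(a * t)) * -t)
    (Metric.ball_mem_nhds a₀ hε) (.of_forall fun a => by fun_prop)
    (integrableOn_cpow_mul_exp_neg_mul hs ha₀) (by fun_prop)
    ((ae_restrict_iff' measurableSet_Ioi).mpr (.of_forall hbound))
    (integrableOn_cpow_mul_exp_neg_mul (s := s + 1) (by simp; linarith)
      (by simpa using hε)).norm
    (.of_forall fun t a _ => hderiv t a)).2.differentiableAt.differentiableWithinAt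

theorem integral_cpow_mul_exp_neg_mul_Ioi_of_re_pos {s a : ℂ} (hs : 0 < s.re) (ha : 0 < a.re) :
    ∫ t in Ioi (0 : ℝ), (t : ℂ) ^ (s - 1) * exp (-(a * t)) = a ^ (-s) * Gamma s := by
  have hU : IsPreconnected {a : ℂ | 0 < a.re} := (convex_halfSpace_re_gt 0).isPreconnected
  have hopen : IsOpen {a : ℂ | 0 < a.re} := isOpen_lt continuous_const continuous_re
  have hrhs : DifferentiableOn ℂ (fun a : ℂ => a ^ (-s) * Gamma s) {a | 0 < a.re} :=
    fun a ha => ((differentiableAt_id.cpow_const (Or.inl ha)).mul_const _).differentiableWithinAt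
  have hreal : Tendsto ((↑) : ℝ → ℂ) (𝓝[≠] 1) (𝓝[≠] 1) :=
    continuous_ofReal.continuousWithinAt.tendsto_nhdsWithin fun _ => ofReal_ne_one.mpr
  refine ((differentiableOn_integral_cpow_mul_exp_neg_mul hs).analyticOnNhd hopen)
    |>.eqOn_of_preconnected_of_frequently_eq (hrhs.analyticOnNhd hopen) hU (by simp)
      (hreal.frequently ?_) ha
  refine ((eventually_gt_nhds zero_lt_one).filter_mono nhdsWithin_le_nhds).frequently.mono
    fun r hr => ?_
  rw [integral_cpow_mul_exp_neg_mul_Ioi hs hr, one_div, cpow_neg,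
    inv_cpow _ _ (by simp [arg_ofReal_of_nonneg hr.le, Real.pi_ne_zero.symm])]

theorem integrableOn_one_add_pow_mul_rpow_mul_exp_neg_mul {b : ℝ} (hb : 0 < b) (n : ℕ) {a : ℝ}
    (ha : -1 < a) :
    IntegrableOn (fun t : ℝ => (1 + t) ^ n * (t ^ a * Real.exp (-(b * t)))) (Ioi 0) := by
  induction n generalizing a with
  | zero => simpa using integrableOn_rpow_mul_exp_neg_mul_rpow ha zero_lt_one hb
  | succ n ih =>
    refine ((ih ha).add (ih (a := a + 1) (by linarith))).congr_fun (fun t (ht : 0 < t) => ?_)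
      measurableSet_Ioi
    rw [Pi.add_apply, Real.rpow_add_one ht.ne']
    ring

theorem inv_one_sub_exp_neg_le {t : ℝ} (ht : 0 < t) :
    (1 - Real.exp (-t))⁻¹ ≤ (1 + t) / t := by
  have hexp : Real.exp (-t) ≤ (1 + t)⁻¹ := by
    rw [Real.exp_neg]
    exact inv_anti₀ (by positivity) (by linarith [Real.add_one_le_exp t])
  have hsub : 1 - (1 + t)⁻¹ = t / (1 + t) := by field_simp; ring
  rw [← inv_div]
  exact inv_anti₀ (by positivity) (by linarith)

theorem integrableOn_rpow_mul_exp_neg_mul_mul_inv_one_sub_exp_neg_pow {σ b : ℝ} {N : ℕ}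
    (hσ : N < σ) (hb : 0 < b) :
    IntegrableOn (fun t : ℝ => t ^ (σ - 1) * Real.exp (-(b * t)) * (1 - Real.exp (-t))⁻¹ ^ N)
      (Ioi 0) := by
  refine (integrableOn_one_add_pow_mul_rpow_mul_exp_neg_mul hb N (a := σ - 1 - N)
    (by linarith)).mono' (by fun_prop) ((ae_restrict_iff' measurableSet_Ioi).mpr
      (.of_forall fun t (ht : 0 < t) => ?_))
  have hexp : Real.exp (-t) < 1 := Real.exp_lt_one_iff.mpr (by linarith)
  have hinv_nonneg : 0 ≤ (1 - Real.exp (-t))⁻¹ := by simp only [inv_nonneg]; linarith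
  rw [Real.norm_of_nonneg (by positivity), Real.rpow_sub ht (σ - 1), Real.rpow_natCast]
  calc t ^ (σ - 1) * Real.exp (-(b * t)) * (1 - Real.exp (-t))⁻¹ ^ N
      ≤ t ^ (σ - 1) * Real.exp (-(b * t)) * ((1 + t) / t) ^ N := by
        gcongr
        exact inv_one_sub_exp_neg_le ht
    _ = (1 + t) ^ N * (t ^ (σ - 1) / t ^ N * Real.exp (-(b * t))) := by
        rw [div_pow]
        field_simp

theorem hasSum_neg_exp_neg_pow_sum {t : ℝ} (ht : 0 < t) (N : ℕ) :
    HasSum (fun m : Fin N → ℕ => (-exp (-(t : ℂ))) ^ ∑ j, m j)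
      ((1 + exp (-(t : ℂ))) ^ (-(N : ℤ))) := by
  simpa [zpow_neg, sub_neg_eq_add] using hasSum_pow_sum_fin (z := -exp (-(t : ℂ)))
    (by simpa [norm_exp] using ht) N

theorem hasSum_norm_neg_exp_neg_pow_sum {t : ℝ} (ht : 0 < t) (N : ℕ) :
    HasSum (fun m : Fin N → ℕ => ‖(-exp (-(t : ℂ))) ^ ∑ j, m j‖)
      ((1 - Real.exp (-t))⁻¹ ^ N) := by
  simpa [norm_exp] using hasSum_pow_sum_fin (z := Real.exp (-t)) (by simpa using ht) N

theorem integral_cpow_mul_exp_neg_mul_mul_neg_exp_neg_pow {s x : ℂ} (hs : 0 < s.re)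
    (hx : 0 < x.re) (n : ℕ) :
    ∫ t in Ioi (0 : ℝ), (t : ℂ) ^ (s - 1) * exp (-x * t) * (-exp (-(t : ℂ))) ^ n =
      Gamma s * ((-1) ^ n * (x + n) ^ (-s)) := by
  have hintegrand : ∀ t : ℝ, (t : ℂ) ^ (s - 1) * exp (-x * t) * (-exp (-(t : ℂ))) ^ n =
      (-1) ^ n * ((t : ℂ) ^ (s - 1) * exp (-((x + n) * t))) := fun t => by
    rw [neg_pow, ← exp_nat_mul, show -((x + n) * t) = -x * t + n * -t by ring, exp_add]
    ring
  simp_rw [hintegrand]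
  rw [integral_const_mul, integral_cpow_mul_exp_neg_mul_Ioi_of_re_pos hs (by simp; positivity)]
  ring

theorem barnes_euler_mellin_general (N : ℕ) (x s : ℂ) (hx : 0 < x.re)
    (hs : (N : ℝ) < s.re) :
    ∑' m : Fin N → ℕ, (-1 : ℂ) ^ (∑ j, m j) * (x + ∑ j, (m j : ℂ)) ^ (-s) =
      (1 / Complex.Gamma s) *
        ∫ t in Set.Ioi (0 : ℝ),
          (t : ℂ) ^ (s - 1) * Complex.exp (-x * t) *
            (1 + Complex.exp (-(t : ℂ))) ^ (-(N : ℤ)) := by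
  have hσ : 0 < s.re := (Nat.cast_nonneg N).trans_lt hs
  set c : ℝ → ℂ := fun t => (t : ℂ) ^ (s - 1) * exp (-x * t)
  set F : (Fin N → ℕ) → ℝ → ℂ := fun m t => c t * (-exp (-(t : ℂ))) ^ ∑ j, m j
  have hnorm : ∀ t ∈ Ioi (0 : ℝ), HasSum (‖F · t‖) (‖c t‖ * (1 - Real.exp (-t))⁻¹ ^ N) :=
    fun t ht => by
      simpa only [F, norm_mul] using (hasSum_norm_neg_exp_neg_pow_sum ht N).mul_left _
  have hnorm_integrable : IntegrableOn (fun t => ∑' m, ‖F m t‖) (Ioi 0) := by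
    refine IntegrableOn.congr_fun
      (integrableOn_rpow_mul_exp_neg_mul_mul_inv_one_sub_exp_neg_pow hs hx)
      (fun t (ht : 0 < t) => ?_) measurableSet_Ioi
    simp only [(hnorm t ht).tsum_eq, c, neg_mul, norm_cpow_mul_exp_neg_mul ht]
  have hintegral := hasSum_integral_of_dominated_convergence (μ := volume.restrict (Ioi 0))
    (fun m t => ‖F m t‖) (fun m => by fun_prop) (fun m => .of_forall fun t => le_rfl)
    ((ae_restrict_iff' measurableSet_Ioi).mpr (.of_forall fun t ht => (hnorm t ht).summable))
    hnorm_integrable ((ae_restrict_iff' measurableSet_Ioi).mpr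
      (.of_forall fun t ht => (hasSum_neg_exp_neg_pow_sum ht N).mul_left (c t)))
  simp only [F, c, integral_cpow_mul_exp_neg_mul_mul_neg_exp_neg_pow hσ hx, Nat.cast_sum]
    at hintegral
  rw [one_div, ← (hintegral.mul_left (Gamma s)⁻¹).tsum_eq]
  simp_rw [inv_mul_cancel_left₀ (Gamma_ne_zero_of_re_pos hσ)]

/-- **Mellin representation of the multiple Barnes–Euler zeta function.** For `N ≥ 1`,
`Re(x) > 0` and `Re(s) > N`,
`Σ_{m : Fin N → ℕ} (-1)^{m₁+⋯+m_N} (x + m₁ + ⋯ + m_N)^{-s}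
  = (1/Γ(s)) ∫_0^∞ t^{s-1} e^{-xt} (1 + e^{-t})^{-N} dt`. -/
theorem barnes_euler_mellin (N : ℕ) (hN : 0 < N) (x s : ℂ) (hx : 0 < x.re)
    (hs : (N : ℝ) < s.re) :
    ∑' m : Fin N → ℕ, (-1 : ℂ) ^ (∑ j, m j) * (x + ∑ j, (m j : ℂ)) ^ (-s) =
      (1 / Complex.Gamma s) *
        ∫ t in Set.Ioi (0 : ℝ),
          (t : ℂ) ^ (s - 1) * Complex.exp (-x * t) *
            (1 + Complex.exp (-(t : ℂ))) ^ (-(N : ℤ)) :=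
  barnes_euler_mellin_general N x s hx hs
end
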